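/- Let μ be a probability measure on a measurable space X and suppose K : X × X → ℝ satisfies K(ζ, ξ) ≤ ln(1/| |f(ζ)| − |f(ξ)| |) + M for some measurable f : X → ℂ, constant M, and all ζ ≠ ξ. If ν is the pushforward of μ under x ↦ |f(x)| and ν is the arcsine measure on [R, L_n], then ∬ K dμ dμ ≤ M − ln((L_n − R)/4). -/

import Mathlib

/-!
Through `|f|` the double integral of the logarithmic kernel becomes the logarithmic energy of the
arcsine measure `ν` on `[a, b] = [R, Lₙ]`. Substituting `y = (a + b)/2 + (b - a)/2 · cos θ` turns
`ν` into the uniform measure `dθ / π` on `(0, π)`, and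
`cos α - cos θ = -2 sin ((α + θ)/2) sin ((α - θ)/2)` reduces the potential of `ν` to
`∫₀^π log sin = -π log 2`: for every `x ∈ (a, b)`, `∫ log ((b - a)/|x - y|) dν(y) = log 4`.
As `ν` has no atoms the diagonal is `μ ⊗ μ`-null, so the hypothesis on `K` holds almost everywhere
and integrates to the bound.
-/

open MeasureTheory Real Set
open scoped ENNReal

theorem ae_prod_fst_ne_snd {α : Type*} [MeasurableSpace α] [MeasurableEq α]
    (μ ν : Measure α) [SFinite ν] [NullSingletonClass ν] : ∀ᵐ q ∂μ.prod ν, q.1 ≠ q.2 :=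
  (Measure.ae_prod_iff_ae_ae measurableSet_diagonal.compl).2 <|
    ae_of_all _ fun x => (ν.ae_ne x).mono fun _ h => Ne.symm h

theorem integral_log_sin_add_pi (a : ℝ) : ∫ x in a..a + π, log (sin x) = -log 2 * π := by
  have hper : Function.Periodic (fun x => log (sin x)) π := fun x => by
    simp only [sin_add_pi, log_neg_eq_log]
  rw [hper.intervalIntegral_add_eq a 0, zero_add, integral_log_sin_zero_pi]

theorem ae_cos_ne_cos (α : ℝ) : ∀ᵐ θ, θ ∈ Icc 0 π → cos θ ≠ cos α := by
  filter_upwards [volume.ae_ne (arccos (cos α))] with θ hθ hmem hcos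
  exact hθ (by rw [← hcos, arccos_cos hmem.1 hmem.2])

theorem log_abs_cos_sub_cos {θ α : ℝ} (h : cos θ ≠ cos α) :
    log |cos θ - cos α| = log 2 + log (sin (α / 2 + θ / 2)) + log (sin (α / 2 - θ / 2)) := by
  have hprod : cos α - cos θ = -2 * sin (α / 2 + θ / 2) * sin (α / 2 - θ / 2) := by
    rw [cos_sub_cos]; ring_nf
  have hne : -2 * sin (α / 2 + θ / 2) * sin (α / 2 - θ / 2) ≠ 0 := hprod ▸ sub_ne_zero.2 h.symm
  have h₁ : sin (α / 2 + θ / 2) ≠ 0 := fun h => hne (by rw [h]; ring)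
  have h₂ : sin (α / 2 - θ / 2) ≠ 0 := fun h => hne (by rw [h]; ring)
  rw [abs_sub_comm, log_abs, hprod, log_mul (by simpa using h₁) h₂, log_mul (by norm_num) h₁,
    log_neg_eq_log]

theorem intervalIntegrable_log_abs_cos_sub_cos (α a b : ℝ) :
    IntervalIntegrable (fun θ => log |cos θ - cos α|) volume a b := by
  simpa only [Function.comp_def, log_abs] using
    MeromorphicOn.intervalIntegrable_log (f := fun θ => cos θ - cos α) fun θ _ => by fun_prop

theorem integral_log_abs_cos_sub_cos (α : ℝ) :
    ∫ θ in 0..π, log |cos θ - cos α| = -π * log 2 := by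
  have hsplit : ∫ θ in 0..π, log |cos θ - cos α|
      = ∫ θ in 0..π, (log 2 + log (sin (α / 2 + θ / 2)) + log (sin (α / 2 - θ / 2))) := by
    refine intervalIntegral.integral_congr_ae ?_
    filter_upwards [ae_cos_ne_cos α] with θ hθ hmem
    rw [uIoc_of_le pi_pos.le] at hmem
    exact log_abs_cos_sub_cos (hθ (Ioc_subset_Icc_self hmem))
  have hplus : ∫ θ in 0..π, log (sin (α / 2 + θ / 2))
      = 2 * ∫ u in α / 2..α / 2 + π / 2, log (sin u) := by
    simpa using intervalIntegral.integral_comp_add_div (fun u => log (sin u)) two_ne_zero (α / 2)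
      (a := 0) (b := π)
  have hminus : ∫ θ in 0..π, log (sin (α / 2 - θ / 2))
      = 2 * ∫ u in α / 2 - π / 2..α / 2, log (sin u) := by
    simpa using intervalIntegral.integral_comp_sub_div (fun u => log (sin u)) two_ne_zero (α / 2)
      (a := 0) (b := π)
  have hperiod : (∫ u in α / 2 - π / 2..α / 2, log (sin u))
      + ∫ u in α / 2..α / 2 + π / 2, log (sin u) = -log 2 * π := by
    rw [intervalIntegral.integral_add_adjacent_intervals (f := fun u => log (sin u))
      intervalIntegrable_log_sin intervalIntegrable_log_sin,
      show α / 2 + π / 2 = α / 2 - π / 2 + π by ring, integral_log_sin_add_pi]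
  have hint₁ : IntervalIntegrable (fun θ => log (sin (α / 2 + θ / 2))) volume 0 π :=
    MeromorphicOn.intervalIntegrable_log (f := fun θ => sin (α / 2 + θ / 2)) fun θ _ => by fun_prop
  have hint₂ : IntervalIntegrable (fun θ => log (sin (α / 2 - θ / 2))) volume 0 π :=
    MeromorphicOn.intervalIntegrable_log (f := fun θ => sin (α / 2 - θ / 2)) fun θ _ => by fun_prop
  rw [hsplit, intervalIntegral.integral_add (intervalIntegrable_const.add hint₁) hint₂,
    intervalIntegral.integral_add intervalIntegrable_const hint₁,
    intervalIntegral.integral_const, hplus, hminus, sub_zero, smul_eq_mul]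
  linarith

theorem lintegral_log_two_div_abs_cos_sub_cos (α : ℝ) :
    ∫⁻ θ in Ioo 0 π, ENNReal.ofReal (log (2 / |cos θ - cos α|))
      = ENNReal.ofReal (π * log 4) := by
  have hae : (fun θ => log (2 / |cos θ - cos α|)) =ᵐ[volume.restrict (Ioo 0 π)]
      fun θ => log 2 - log |cos θ - cos α| := by
    refine (ae_restrict_iff' measurableSet_Ioo).2 ((ae_cos_ne_cos α).mono fun θ h hθ => ?_)
    exact log_div two_ne_zero (abs_ne_zero.2 (sub_ne_zero.2 (h (Ioo_subset_Icc_self hθ))))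
  have hint : IntegrableOn (fun θ => log 2 - log |cos θ - cos α|) (Ioo 0 π) :=
    (intervalIntegrable_iff_integrableOn_Ioo_of_le pi_pos.le).1
      (intervalIntegrable_const.sub (intervalIntegrable_log_abs_cos_sub_cos α 0 π))
  have hnonneg : ∀ θ, 0 ≤ log (2 / |cos θ - cos α|) := fun θ => by
    rcases eq_or_ne (cos θ - cos α) 0 with h | h
    · simp [h]
    · refine log_nonneg ((one_le_div (abs_pos.2 h)).2 ?_)
      linarith [abs_sub (cos θ) (cos α), abs_cos_le_one θ, abs_cos_le_one α]
  rw [← ofReal_integral_eq_lintegral_ofReal (hint.congr hae.symm) (ae_of_all _ hnonneg),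
    integral_congr_ae hae, ← integral_Ioc_eq_integral_Ioo,
    ← intervalIntegral.integral_of_le pi_pos.le,
    intervalIntegral.integral_sub intervalIntegrable_const
      (intervalIntegrable_log_abs_cos_sub_cos α 0 π),
    integral_log_abs_cos_sub_cos, intervalIntegral.integral_const, sub_zero, smul_eq_mul,
    show (4 : ℝ) = 2 ^ 2 by norm_num, log_pow]
  ring_nf

noncomputable def arcsineMeasure (a b : ℝ) : Measure ℝ :=
  (volume.restrict (Ioo a b)).withDensity fun x => ENNReal.ofReal (1 / (π * √((x - a) * (b - x))))

section

variable {a b : ℝ}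

instance : NullSingletonClass (arcsineMeasure a b) := by
  unfold arcsineMeasure; infer_instance

theorem ae_mem_Ioo_arcsineMeasure : ∀ᵐ x ∂arcsineMeasure a b, x ∈ Ioo a b :=
  (withDensity_absolutelyContinuous _ _).ae_le (ae_restrict_mem measurableSet_Ioo)

theorem image_affine_cos_Ioo (hab : a < b) :
    (fun θ => (b - a) / 2 * cos θ + (a + b) / 2) '' Ioo 0 π = Ioo a b := by
  change ((fun t => (b - a) / 2 * t + (a + b) / 2) ∘ cos) '' Ioo 0 π = Ioo a b
  rw [image_comp,
    show cos '' Ioo 0 π = Ioo (-1) 1 from cosPartialHomeomorph.image_source_eq_target,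
    image_affine_Ioo (by linarith)]
  congr 1 <;> ring

theorem injOn_affine_cos_Ioo (hab : a < b) :
    InjOn (fun θ => (b - a) / 2 * cos θ + (a + b) / 2) (Ioo 0 π) := by
  have hr : (b - a) / 2 ≠ 0 := by linarith
  refine Function.Injective.comp_injOn (g := fun t => (b - a) / 2 * t + (a + b) / 2) ?_
    (injOn_cos.mono Ioo_subset_Icc_self)
  intro s t h
  simpa [hr] using h

theorem lintegral_arcsineMeasure (hab : a < b) {F : ℝ → ℝ≥0∞} (hF : Measurable F) :
    ∫⁻ y, F y ∂arcsineMeasure a b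
      = ENNReal.ofReal π⁻¹ * ∫⁻ θ in Ioo 0 π, F ((b - a) / 2 * cos θ + (a + b) / 2) := by
  set r := (b - a) / 2
  have hr : 0 < r := half_pos (sub_pos.2 hab)
  have hderiv : ∀ θ ∈ Ioo 0 π, HasDerivWithinAt (fun θ => r * cos θ + (a + b) / 2)
      (r * -sin θ) (Ioo 0 π) θ :=
    fun θ _ => (((hasDerivAt_cos θ).const_mul r).add_const _).hasDerivWithinAt
  rw [arcsineMeasure, lintegral_withDensity_eq_lintegral_mul _ (by fun_prop) hF,
    ← image_affine_cos_Ioo hab,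
    lintegral_image_eq_lintegral_abs_deriv_mul measurableSet_Ioo hderiv (injOn_affine_cos_Ioo hab),
    ← lintegral_const_mul' _ _ ENNReal.ofReal_ne_top]
  refine setLIntegral_congr_fun measurableSet_Ioo fun θ hθ => ?_
  have hsin : 0 < sin θ := sin_pos_of_pos_of_lt_pi hθ.1 hθ.2
  have hsqrt :
      √((r * cos θ + (a + b) / 2 - a) * (b - (r * cos θ + (a + b) / 2))) = r * sin θ := by
    rw [← sqrt_sq (by positivity : 0 ≤ r * sin θ)]
    congr 1
    linear_combination (-r ^ 2) * sin_sq_add_cos_sq θ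
  simp only [Pi.mul_apply, hsqrt, ← mul_assoc, mul_neg, abs_neg, abs_of_pos (mul_pos hr hsin)]
  rw [← ENNReal.ofReal_mul (by positivity)]
  congr 2
  field_simp

theorem isProbabilityMeasure_arcsineMeasure (hab : a < b) :
    IsProbabilityMeasure (arcsineMeasure a b) := by
  constructor
  have := lintegral_arcsineMeasure hab (F := 1) measurable_const
  simp only [Pi.one_apply, lintegral_one, Measure.restrict_apply_univ, Real.volume_Ioo,
    sub_zero] at this
  rw [this, ← ENNReal.ofReal_mul (by positivity), inv_mul_cancel₀ pi_ne_zero, ENNReal.ofReal_one]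

theorem lintegral_log_div_abs_sub_arcsineMeasure (hab : a < b) {x : ℝ} (hx : x ∈ Ioo a b) :
    ∫⁻ y, ENNReal.ofReal (log ((b - a) / |x - y|)) ∂arcsineMeasure a b
      = ENNReal.ofReal (log 4) := by
  obtain ⟨α, -, rfl⟩ := (image_affine_cos_Ioo hab).symm ▸ hx
  have hr : 0 < (b - a) / 2 := half_pos (sub_pos.2 hab)
  have hratio : ∀ θ,
      (b - a) / |(b - a) / 2 * cos α + (a + b) / 2 - ((b - a) / 2 * cos θ + (a + b) / 2)|
        = 2 / |cos θ - cos α| := fun θ => by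
    rw [show (b - a) / 2 * cos α + (a + b) / 2 - ((b - a) / 2 * cos θ + (a + b) / 2)
      = -((b - a) / 2 * (cos θ - cos α)) by ring, abs_neg, abs_mul, abs_of_pos hr,
      ← div_div, div_div_cancel₀ (by linarith)]
  rw [lintegral_arcsineMeasure hab (by fun_prop)]
  simp only [hratio]
  rw [lintegral_log_two_div_abs_cos_sub_cos, ← ENNReal.ofReal_mul (by positivity),
    inv_mul_cancel_left₀ pi_ne_zero]

theorem lintegral_prod_log_div_abs_sub_arcsineMeasure (hab : a < b) :
    ∫⁻ q, ENNReal.ofReal (log ((b - a) / |q.1 - q.2|))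
      ∂(arcsineMeasure a b).prod (arcsineMeasure a b) = ENNReal.ofReal (log 4) := by
  have := isProbabilityMeasure_arcsineMeasure hab
  rw [lintegral_prod _ (by fun_prop),
    lintegral_congr_ae (ae_mem_Ioo_arcsineMeasure.mono
      fun x hx => lintegral_log_div_abs_sub_arcsineMeasure hab hx),
    lintegral_const, measure_univ, mul_one]

theorem integrable_and_integral_log_one_div_abs_sub_arcsineMeasure (hab : a < b) :
    Integrable (fun q : ℝ × ℝ => log (1 / |q.1 - q.2|))
        ((arcsineMeasure a b).prod (arcsineMeasure a b)) ∧
      ∫ q, log (1 / |q.1 - q.2|) ∂(arcsineMeasure a b).prod (arcsineMeasure a b)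
        = -log ((b - a) / 4) := by
  set ν := arcsineMeasure a b
  have := isProbabilityMeasure_arcsineMeasure hab
  set Λ : ℝ × ℝ → ℝ := fun q => log ((b - a) / |q.1 - q.2|)
  have hΛ_meas : Measurable Λ := by fun_prop
  have hΛ_nonneg : 0 ≤ᵐ[ν.prod ν] Λ := by
    filter_upwards [Measure.quasiMeasurePreserving_fst.ae ae_mem_Ioo_arcsineMeasure,
      Measure.quasiMeasurePreserving_snd.ae ae_mem_Ioo_arcsineMeasure] with q h₁ h₂
    rcases eq_or_ne q.1 q.2 with h | h
    · simp [Λ, h]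
    · refine log_nonneg ((one_le_div (abs_pos.2 (sub_ne_zero.2 h))).2 ?_)
      exact abs_sub_le_iff.2 ⟨by linarith [h₁.2, h₂.1], by linarith [h₁.1, h₂.2]⟩
  have hΛ := lintegral_prod_log_div_abs_sub_arcsineMeasure hab
  have hΛ_int : Integrable Λ (ν.prod ν) := ⟨hΛ_meas.aestronglyMeasurable,
    (hasFiniteIntegral_iff_ofReal hΛ_nonneg).2 (hΛ ▸ ENNReal.ofReal_lt_top)⟩
  have hΛ_eq : ∫ q, Λ q ∂ν.prod ν = log 4 := by
    rw [integral_eq_lintegral_of_nonneg_ae hΛ_nonneg hΛ_meas.aestronglyMeasurable, hΛ,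
      ENNReal.toReal_ofReal (log_nonneg (by norm_num))]
  have hae :
      (fun q : ℝ × ℝ => log (1 / |q.1 - q.2|)) =ᵐ[ν.prod ν] fun q => Λ q - log (b - a) := by
    filter_upwards [ae_prod_fst_ne_snd ν ν] with q hq
    simp only [Λ]
    rw [log_div (sub_pos.2 hab).ne' (abs_ne_zero.2 (sub_ne_zero.2 hq)), one_div, log_inv]
    ring
  refine ⟨(hΛ_int.sub (integrable_const _)).congr hae.symm, ?_⟩
  rw [integral_congr_ae hae, integral_sub hΛ_int (integrable_const _), hΛ_eq, integral_const,
    probReal_univ, one_smul, log_div (sub_pos.2 hab).ne' (by norm_num)]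
  ring

end

/-- If K(ζ,ξ) ≤ ln(1/||f(ζ)|−|f(ξ)||) + M off the diagonal and the pushforward
of the probability measure μ under |f| is the arcsine measure on [R, Lₙ],
then ∬ K dμ dμ ≤ M − ln((Lₙ − R)/4). -/
theorem energy_upper_bound {X : Type*} [MeasurableSpace X]
    (μ : Measure X) [IsProbabilityMeasure μ]
    (K : X × X → ℝ) (f : X → ℂ) (hf : Measurable f)
    (M R Ln : ℝ) (hRL : R < Ln)
    (hK : ∀ ζ ξ : X, ζ ≠ ξ →
      K (ζ, ξ) ≤ Real.log (1 / |‖f ζ‖ - ‖f ξ‖|) + M)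
    (hKint : Integrable K (μ.prod μ))
    (hpush : Measure.map (fun x => (‖f x‖ : ℝ)) μ =
      (volume.restrict (Set.Ioo R Ln)).withDensity
        (fun x => ENNReal.ofReal (1 / (Real.pi * Real.sqrt ((x - R) * (Ln - x)))))) :
    ∫ p, K p ∂(μ.prod μ) ≤ M - Real.log ((Ln - R) / 4) := by
  set g : X → ℝ := fun x => ‖f x‖
  have hg : Measurable g := hf.norm
  have hgg : Measurable (Prod.map g g) := hg.prodMap hg
  set ν := arcsineMeasure R Ln
  have := isProbabilityMeasure_arcsineMeasure hRL
  have hν : Measure.map g μ = ν := hpush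
  have hmap : Measure.map (Prod.map g g) (μ.prod μ) = ν.prod ν := by
    rw [← Measure.map_prod_map _ _ hg hg, hν]
  have hoff : ∀ᵐ p ∂μ.prod μ, g p.1 ≠ g p.2 :=
    ae_of_ae_map hgg.aemeasurable (hmap ▸ ae_prod_fst_ne_snd ν ν)
  obtain ⟨hint, henergy⟩ := integrable_and_integral_log_one_div_abs_sub_arcsineMeasure hRL
  rw [← hmap] at hint henergy
  have hint' : Integrable (fun p : X × X => log (1 / |g p.1 - g p.2|)) (μ.prod μ) :=
    hint.comp_measurable hgg
  calc ∫ p, K p ∂μ.prod μ ≤ ∫ p, (log (1 / |g p.1 - g p.2|) + M) ∂μ.prod μ :=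
        integral_mono_ae hKint (hint'.add (integrable_const M))
          (hoff.mono fun p hp => hK p.1 p.2 (ne_of_apply_ne g hp))
    _ = ∫ q, log (1 / |q.1 - q.2|) ∂(μ.prod μ).map (Prod.map g g) + M := by
        rw [integral_add hint' (integrable_const M), integral_const, probReal_univ, one_smul,
          integral_map hgg.aemeasurable hint.aestronglyMeasurable]
        rfl
    _ = M - log ((Ln - R) / 4) := by rw [henergy]; ring
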